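/- Let t be a partial function on {1,…,n} that is both order-preserving and order-decreasing, with domain X = dom t. Call t irreducible if t is not the identity map of X and whenever t = h ∘ s with s, h partial functions on {1,…,n} that are both order-preserving and order-decreasing and satisfy dom s = dom t and dom h = im s, either s is the identity map of its domain or h is the identity map of its domain. Then t is irreducible if and only if there exists j ∈ X such that t(i) = i for every i ∈ X with i ≠ j and t(j) = j − 1. -/
import Mathlib


/-- The monoid of partial functions on `{1,…,n}`, modeled as `Fin n → Option (Fin n)`,
under composition of partial functions (right to left). -/
abbrev PT (n : ℕ) := Fin n → Option (Fin n)

namespace PT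

variable {n : ℕ}

/-- Composition of partial functions, right to left: `comp s t = s ∘ t`. -/
def comp (s t : PT n) : PT n := fun x => (t x).bind s

/-- The domain of a partial function. -/
def dom (t : PT n) : Finset (Fin n) := Finset.univ.filter fun x => (t x).isSome

/-- The image (range) of a partial function. -/
def ran (t : PT n) : Finset (Fin n) := Finset.univ.filter fun y => ∃ x, t x = some y

/-- The identity partial function on the subset `X`. -/
def idOn (X : Finset (Fin n)) : PT n := fun x => if x ∈ X then some x else none

instance : Monoid (PT n) where
  mul := comp
  one := fun x => some x
  mul_assoc s t w := by
    funext x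
    show (w x).bind (fun z => (t z).bind s) = ((w x).bind t).bind s
    exact (Option.bind_assoc (w x) t s).symm
  one_mul t := by
    funext x
    show (t x).bind (fun y => some y) = t x
    cases t x <;> rfl
  mul_one t := by
    funext x
    show (some x).bind t = t x
    rfl

end PT

namespace PT

/-- A partial function is order-decreasing if `t x ≤ x` for all `x` in its domain. -/
def OrderDecreasing (t : PT n) : Prop := ∀ x y, t x = some y → y ≤ x

/-- A partial function is order-preserving if `x₁ ≤ x₂` implies `t x₁ ≤ t x₂`
for `x₁, x₂` in its domain. -/
def OrderPreserving (t : PT n) : Prop :=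
  ∀ x₁ x₂ y₁ y₂, t x₁ = some y₁ → t x₂ = some y₂ → x₁ ≤ x₂ → y₁ ≤ y₂

/-- `t` is irreducible (as a morphism of the category `EC_n` associated to the partial
Catalan monoid): it is not the identity of its domain, and in any factorization
`t = h ∘ s` through order-preserving and order-decreasing partial functions with
`dom s = dom t` and `dom h = im s`, one of `s`, `h` is the identity of its domain. -/
def IrreducibleOC (t : PT n) : Prop :=
  t ≠ idOn (dom t) ∧
    ∀ s h : PT n, OrderPreserving s → OrderDecreasing s → OrderPreserving h →
      OrderDecreasing h → dom s = dom t → dom h = ran s → t = comp h s →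
      s = idOn (dom s) ∨ h = idOn (dom h)

end PT

namespace PT
variable {n : ℕ}

lemma mem_dom_iff {t : PT n} {x : Fin n} : x ∈ dom t ↔ ∃ y, t x = some y := by
  simp [dom, Option.isSome_iff_exists]

lemma none_of_notMem_dom {t : PT n} {x : Fin n} (h : x ∉ dom t) : t x = none := by
  rw [mem_dom_iff] at h
  cases hx : t x with
  | none => rfl
  | some y => exact absurd ⟨y, hx⟩ h

lemma mem_ran_iff {t : PT n} {y : Fin n} : y ∈ ran t ↔ ∃ x, t x = some y := by
  simp [ran]

lemma eq_idOn_dom_iff (t : PT n) : t = idOn (dom t) ↔ ∀ x ∈ dom t, t x = some x := by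
  constructor
  · intro he x hx
    rw [he]; simp [idOn, hx]
  · intro hf
    funext x
    by_cases hx : x ∈ dom t
    · rw [hf x hx]; simp [idOn, hx]
    · rw [none_of_notMem_dom hx]; simp [idOn, hx]

lemma comp_apply (s t : PT n) (x : Fin n) : comp s t x = (t x).bind s := rfl

end PT

open PT in
/-- A partial function `t` on `{1,…,n}` which is both order-preserving and
order-decreasing, with domain `X = dom t`, is irreducible if and only if there is `j ∈ X`
with `t i = i` for all `i ∈ X \ {j}` and `t j = j − 1`. -/
theorem irreducible_catalan_iff (n : ℕ) (t : PT n)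
    (htp : OrderPreserving t) (htd : OrderDecreasing t) :
    IrreducibleOC t ↔
      ∃ j ∈ dom t, (∀ i ∈ dom t, i ≠ j → t i = some i) ∧
        ∃ y, t j = some y ∧ (y : ℕ) + 1 = (j : ℕ) := by
  classical
  constructor
  · rintro ⟨hne, hfac⟩
    have hne' : ∃ x ∈ dom t, t x ≠ some x := by
      by_contra hc
      push_neg at hc
      exact hne ((eq_idOn_dom_iff t).mpr hc)
    set M : Finset (Fin n) := (dom t).filter (fun x => t x ≠ some x) with hM
    have hMne : M.Nonempty := by
      obtain ⟨x, hx1, hx2⟩ := hne'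
      exact ⟨x, by simp [hM, hx1, hx2]⟩
    set j : Fin n := M.min' hMne with hj
    have hjM : j ∈ M := M.min'_mem hMne
    have hjdom : j ∈ dom t := (Finset.mem_filter.mp hjM).1
    have hjmoved : t j ≠ some j := (Finset.mem_filter.mp hjM).2
    obtain ⟨yj, hyj⟩ := mem_dom_iff.mp hjdom
    have hyj_lt : (yj : ℕ) < (j : ℕ) := by
      have h1 : yj ≤ j := htd j yj hyj
      have h2 : yj ≠ j := fun e => hjmoved (by rw [hyj, e])
      have h3 : (yj : ℕ) ≠ (j : ℕ) := fun e => h2 (Fin.ext e)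
      have := Fin.le_def.mp h1
      omega
    set p : Fin n := ⟨(j : ℕ) - 1, lt_of_le_of_lt (Nat.sub_le _ _) j.isLt⟩ with hp
    have hpval : (p : ℕ) = (j : ℕ) - 1 := rfl
    have hp_lt_j : (p : ℕ) < (j : ℕ) := by omega
    have hmin : ∀ i ∈ dom t, (i : ℕ) < (j : ℕ) → t i = some i := by
      intro i hi hlt
      by_contra hc
      have hiM : i ∈ M := Finset.mem_filter.mpr ⟨hi, hc⟩
      have := Fin.le_def.mp (M.min'_le i hiM)
      omega
    set s : PT n := fun x => if x ∈ dom t then (if x = j then some p else some x) else none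
      with hs_def
    set h : PT n := fun x => if x = p then t j else
        if x ∈ dom t ∧ x ≠ j then t x else none with hh_def
    have hsx : ∀ x ∈ dom t, x ≠ j → s x = some x := by
      intro x hx hxj; simp [hs_def, hx, hxj]
    have hsj : s j = some p := by simp [hs_def, hjdom]
    have hsnone : ∀ x, x ∉ dom t → s x = none := by
      intro x hx; simp [hs_def, hx]
    have hhx : ∀ x, x ≠ p → x ∈ dom t → x ≠ j → h x = t x := by
      intro x h1 h2 h3; simp [hh_def, h1, h2, h3]
    have hhpv : h p = t j := by simp [hh_def]
    have key_s : ∀ x z, s x = some z → x ∈ dom t ∧ ((x = j ∧ z = p) ∨ (x ≠ j ∧ z = x)) := by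
      intro x z hxz
      by_cases hx : x ∈ dom t
      · refine ⟨hx, ?_⟩
        by_cases hxj : x = j
        · subst hxj; rw [hsj] at hxz
          exact Or.inl ⟨rfl, (Option.some_inj.mp hxz).symm⟩
        · rw [hsx x hx hxj] at hxz
          exact Or.inr ⟨hxj, (Option.some_inj.mp hxz).symm⟩
      · rw [hsnone x hx] at hxz; cases hxz
    have key_h : ∀ x z, h x = some z →
        (x = p ∧ t j = some z) ∨ (x ≠ p ∧ x ∈ dom t ∧ x ≠ j ∧ t x = some z) := by
      intro x z hxz
      by_cases hxp : x = p
      · subst hxp; rw [hhpv] at hxz; exact Or.inl ⟨rfl, hxz⟩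
      · by_cases hxc : x ∈ dom t ∧ x ≠ j
        · exact Or.inr ⟨hxp, hxc.1, hxc.2, by rw [← hhx x hxp hxc.1 hxc.2]; exact hxz⟩
        · exfalso; rw [show h x = none by simp [hh_def, hxp, hxc]] at hxz; cases hxz
    have hsd : OrderDecreasing s := by
      intro x z hxz
      rcases (key_s x z hxz).2 with ⟨e, f⟩ | ⟨e, f⟩
      · rw [Fin.le_def]
        have a := congrArg Fin.val e
        have b := congrArg Fin.val f
        omega
      · rw [f]
    have hsp : OrderPreserving s := by
      intro x₁ x₂ z₁ z₂ h1 h2 hle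
      rw [Fin.le_def]
      have hle' := Fin.le_def.mp hle
      rcases (key_s x₁ z₁ h1).2 with ⟨e1, f1⟩ | ⟨e1, f1⟩ <;>
        rcases (key_s x₂ z₂ h2).2 with ⟨e2, f2⟩ | ⟨e2, f2⟩ <;>
        have a := congrArg Fin.val f1 <;>
        have b := congrArg Fin.val f2
      · omega
      · have c := congrArg Fin.val e1
        omega
      · have c := congrArg Fin.val e2
        have d : (x₁ : ℕ) ≠ (j : ℕ) := fun e => e1 (Fin.ext e)
        omega
      · omega
    have hhd : OrderDecreasing h := by
      intro x z hxz
      rcases key_h x z hxz with ⟨rfl, htz⟩ | ⟨_, _, _, htz⟩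
      · rw [hyj] at htz
        have : yj = z := Option.some_inj.mp htz
        rw [Fin.le_def]
        omega
      · exact htd x z htz
    have hhp : OrderPreserving h := by
      intro x₁ x₂ z₁ z₂ h1 h2 hle
      have hle' := Fin.le_def.mp hle
      rcases key_h x₁ z₁ h1 with ⟨rfl, ht1⟩ | ⟨e1, ed1, ej1, ht1⟩ <;>
        rcases key_h x₂ z₂ h2 with ⟨he2, ht2⟩ | ⟨e2, ed2, ej2, ht2⟩
      · rw [ht1] at ht2; rw [Option.some_inj.mp ht2]
      · refine htp j x₂ z₁ z₂ ht1 ht2 ?_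
        have : (x₂ : ℕ) ≠ (p : ℕ) := fun e => e2 (Fin.ext e)
        rw [Fin.le_def]; omega
      · subst he2
        refine htp x₁ j z₁ z₂ ht1 ht2 ?_
        have : (x₁ : ℕ) ≠ (p : ℕ) := fun e => e1 (Fin.ext e)
        rw [Fin.le_def]; omega
      · exact htp x₁ x₂ z₁ z₂ ht1 ht2 hle
    have hdoms : dom s = dom t := by
      ext x
      rw [mem_dom_iff]
      constructor
      · rintro ⟨z, hz⟩; exact (key_s x z hz).1
      · intro hx
        by_cases hxj : x = j
        · exact ⟨p, by rw [hxj, hsj]⟩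
        · exact ⟨x, hsx x hx hxj⟩
    have hrans : ∀ z, z ∈ ran s ↔ (z = p ∨ (z ∈ dom t ∧ z ≠ j)) := by
      intro z
      rw [mem_ran_iff]
      constructor
      · rintro ⟨x, hx⟩
        rcases (key_s x z hx) with ⟨hxd, ⟨hxj, rfl⟩ | ⟨hxj, rfl⟩⟩
        · exact Or.inl rfl
        · exact Or.inr ⟨hxd, hxj⟩
      · rintro (rfl | ⟨h1, h2⟩)
        · exact ⟨j, hsj⟩
        · exact ⟨z, hsx z h1 h2⟩
    have hdomh : dom h = ran s := by
      ext z
      rw [mem_dom_iff, hrans]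
      constructor
      · rintro ⟨w, hw⟩
        rcases key_h z w hw with ⟨rfl, _⟩ | ⟨_, h1, h2, _⟩
        · exact Or.inl rfl
        · exact Or.inr ⟨h1, h2⟩
      · rintro (rfl | ⟨h1, h2⟩)
        · exact ⟨yj, by rw [hhpv, hyj]⟩
        · by_cases hzp : z = p
          · exact ⟨yj, by rw [hzp, hhpv, hyj]⟩
          · obtain ⟨w, hw⟩ := mem_dom_iff.mp h1
            exact ⟨w, by rw [hhx z hzp h1 h2, hw]⟩
    have hteq : t = comp h s := by
      funext x
      rw [comp_apply]
      by_cases hx : x ∈ dom t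
      · by_cases hxj : x = j
        · subst hxj
          rw [hsj]
          show t j = h p
          rw [hhpv]
        · rw [hsx x hx hxj]
          show t x = h x
          by_cases hxp : x = p
          · subst hxp
            have htpp : t p = some p := hmin p hx hp_lt_j
            have hyjp : yj = p := by
              have h1 : p ≤ yj := htp p j p yj htpp hyj (by rw [Fin.le_def]; omega)
              have := Fin.le_def.mp h1
              exact Fin.ext (by omega)
            rw [hhpv, htpp, hyj, hyjp]
          · rw [hhx x hxp hx hxj]
      · rw [hsnone x hx, none_of_notMem_dom hx]; rfl
    rcases hfac s h hsp hsd hhp hhd hdoms hdomh hteq with hs | hh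
    · exfalso
      have hjs : j ∈ dom s := by rw [hdoms]; exact hjdom
      have := (eq_idOn_dom_iff s).mp hs j hjs
      rw [hsj] at this
      have := congrArg Fin.val (Option.some_inj.mp this)
      omega
    · have hid : ∀ z ∈ dom h, h z = some z := (eq_idOn_dom_iff h).mp hh
      have hpdomh : p ∈ dom h := mem_dom_iff.mpr ⟨yj, by rw [hhpv, hyj]⟩
      have htj : t j = some p := by
        have := hid p hpdomh
        rw [hhpv] at this
        exact this
      refine ⟨j, hjdom, ?_, p, htj, by omega⟩
      intro i hi hij
      by_cases hip : i = p
      · rw [hip]; exact hmin p (hip ▸ hi) hp_lt_j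
      · obtain ⟨w, hw⟩ := mem_dom_iff.mp hi
        have hhi : h i = t i := hhx i hip hi hij
        have hidomh : i ∈ dom h := mem_dom_iff.mpr ⟨w, by rw [hhi, hw]⟩
        have := hid i hidomh
        rw [hhi] at this
        exact this
  · rintro ⟨j, hjdom, hfix, y, hty, hy1⟩
    constructor
    · intro he
      have := (eq_idOn_dom_iff t).mp he j hjdom
      rw [hty] at this
      have := congrArg Fin.val (Option.some_inj.mp this)
      omega
    · intro s h hsp hsd hhp hhd hds hdh hteq
      have key : ∀ i ∈ dom t, i ≠ j → s i = some i ∧ h i = some i := by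
        intro i hi hij
        have hti : t i = some i := hfix i hi hij
        have hci : (s i).bind h = some i := by
          rw [← comp_apply, ← hteq]; exact hti
        obtain ⟨z, hz⟩ : ∃ z, s i = some z := by
          cases hsi : s i with
          | none => rw [hsi] at hci; cases hci
          | some z => exact ⟨z, rfl⟩
        rw [hz, Option.bind_some] at hci
        have h1 : z ≤ i := hsd i z hz
        have h2 : i ≤ z := hhd z i hci
        have hzi : z = i := le_antisymm h1 h2
        subst hzi
        exact ⟨hz, hci⟩
      have hcj : (s j).bind h = some y := by
        rw [← comp_apply, ← hteq]; exact hty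
      obtain ⟨w, hw⟩ : ∃ w, s j = some w := by
        cases hsj : s j with
        | none => rw [hsj] at hcj; cases hcj
        | some w => exact ⟨w, rfl⟩
      rw [hw, Option.bind_some] at hcj
      have hw_le := Fin.le_def.mp (hsd j w hw)
      have hy_le := Fin.le_def.mp (hhd w y hcj)
      by_cases hwj : (w : ℕ) = (j : ℕ)
      · left
        rw [eq_idOn_dom_iff]
        intro x hx
        rw [hds] at hx
        by_cases hxj : x = j
        · subst hxj; rw [hw, Fin.ext hwj]
        · exact (key x hx hxj).1
      · right
        have hwy : w = y := Fin.ext (by omega)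
        subst hwy
        rw [eq_idOn_dom_iff]
        intro z hz
        rw [hdh, mem_ran_iff] at hz
        obtain ⟨x, hx⟩ := hz
        have hxdom : x ∈ dom t := by rw [← hds]; exact mem_dom_iff.mpr ⟨z, hx⟩
        by_cases hxj : x = j
        · subst hxj
          rw [hw] at hx
          rw [← Option.some_inj.mp hx]
          exact hcj
        · have hsx := (key x hxdom hxj).1
          rw [hsx] at hx
          rw [← Option.some_inj.mp hx]
          exact (key x hxdom hxj).2
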